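/- Let A be an associative algebra over a field k of characteristic 0, let λ ∈ k, and let R : A → A be a Rota–Baxter operator of weight λ. Let l ≥ 1, k₀ ≥ 0 be integers and let b₁, …, b_{l+k₀+1} ∈ A satisfy b_l = b_{l+1} = … = b_{l+k₀} =: c. Then R( R(b₁)···R(b_{l−1}) · c · R(c)^{k₀} · R(b_{l+k₀+1}) ) = (1/(k₀+1)) · R(b₁)···R(b_{l−1}) · R(c)^{k₀+1} · R(b_{l+k₀+1}) + (1/(k₀+1)) · R( Σ_{i=2}^{k₀+1} (−1)^i binom(k₀+1, i) R(b₁)···R(b_{l−1}) · [c, R(c)^{(i−1)}] · R(c)^{k₀+1−i} · R(b_{l+k₀+1}) − Σ_S λ^{|S|−1} ∏_{i=1}^{l+k₀+1} c_i^S ), where S ranges over all nonempty subsets of {1, …, l+k₀+1} except the singletons {i} with l ≤ i ≤ l+k₀, the product ∏_{i=1}^{l+k₀+1} c_i^S is taken in order with c_i^S = b_i if i ∈ S and c_i^S = R(b_i) if i ∉ S, and [c, R(c)^{(p)}] denotes the iterated commutator [[…[[c, R(c)], R(c)]…], R(c)] with p occurrences of R(c). -/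

import Mathlib

/-- Iterated commutator `[y, x^{(p)}] = [[…[[y,x],x]…],x]` with `p` occurrences of `x`. -/
def iterBracket {A : Type*} [Ring A] (y x : A) : ℕ → A
  | 0 => y
  | p + 1 => iterBracket y x p * x - x * iterBracket y x p

/-!
Expanding `R(b₁)⋯R(b_m)` with the Rota–Baxter identity, one factor at a time, writes it as `R`
applied to the sum over nonempty `S ⊆ {1, …, m}` of `λ^{|S|-1} c₁^S ⋯ c_m^S`. When
`b_l = ⋯ = b_{l+k₀} = c`, the singletons `{i}` with `l ≤ i ≤ l + k₀` contribute
`P · Σ_j R(c)^j c R(c)^{k₀-j} · D`, where `P = R(b₁)⋯R(b_{l-1})` and `D = R(b_{l+k₀+1})`.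
Moving every `c` to the left past the powers of `R(c)` turns this sum into
`(k₀ + 1) c R(c)^{k₀}` plus iterated commutators; solving for `R(P c R(c)^{k₀} D)` gives the
formula.
-/

open Finset

theorem Commute.sum_add_pow_mul_pow {R : Type*} [Semiring R] {a b : R} (h : Commute a b)
    (n : ℕ) :
    ∑ j ∈ range (n + 1), (a + b) ^ j * b ^ (n - j) =
      ∑ p ∈ range (n + 1), a ^ p * b ^ (n - p) * (n + 1).choose (p + 1) := by
  calc ∑ j ∈ range (n + 1), (a + b) ^ j * b ^ (n - j)
      = ∑ j ∈ range (n + 1), ∑ p ∈ range (j + 1), a ^ p * b ^ (n - p) * j.choose p := by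
        refine sum_congr rfl fun j hj => ?_
        rw [h.add_pow, sum_mul]
        refine sum_congr rfl fun p hp => ?_
        have hpj : p ≤ j := Nat.lt_succ_iff.1 (mem_range.1 hp)
        have hjn : j ≤ n := Nat.lt_succ_iff.1 (mem_range.1 hj)
        rw [(Nat.cast_commute _ _).right_comm, mul_assoc (a ^ p), ← pow_add]
        congr 3
        omega
    _ = ∑ p ∈ range (n + 1), ∑ j ∈ Icc p n, a ^ p * b ^ (n - p) * j.choose p :=
        sum_comm' fun j p => by simp only [mem_range, mem_Icc]; omega
    _ = _ := by simp_rw [← mul_sum, ← Nat.cast_sum, Nat.sum_Icc_choose]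

section Ring
variable {A : Type*} [Ring A]

theorem iterBracket_eq_pow_apply (y x : A) (p : ℕ) :
    iterBracket y x p = ((LinearMap.mulRight ℤ x - LinearMap.mulLeft ℤ x) ^ p) y := by
  induction p with
  | zero => rfl
  | succ p ih => rw [pow_succ', Module.End.mul_apply, ← ih]; rfl

theorem sum_pow_mul_mul_pow (x y : A) (n : ℕ) :
    ∑ j ∈ range (n + 1), x ^ j * y * x ^ (n - j) =
      ∑ p ∈ range (n + 1), ((-1) ^ p * (n + 1).choose (p + 1) : ℤ) •
        (iterBracket y x p * x ^ (n - p)) := by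
  -- `x ^ j * y = (mulRight x - D) ^ j y`, where `D = [·, x]` commutes with `mulRight x`.
  set D := LinearMap.mulRight ℤ x - LinearMap.mulLeft ℤ x
  have hL : LinearMap.mulLeft ℤ x = -D + LinearMap.mulRight ℤ x := by simp [D]
  have hc : Commute (-D) (LinearMap.mulRight ℤ x) :=
    ((Commute.refl _).sub_left (LinearMap.commute_mulLeft_right x x)).neg_left
  have hsum := congr($(hc.sum_add_pow_mul_pow n) y)
  simp only [(hc.pow_pow _ _).eq] at hsum
  simp only [← hL, LinearMap.pow_mulLeft, LinearMap.pow_mulRight, LinearMap.sum_apply] at hsum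
  refine Eq.trans ?_ (hsum.trans ?_) <;> refine sum_congr rfl fun p _ => ?_
  · simp [mul_assoc]
  · rw [← neg_one_smul ℤ D, smul_pow]
    simp only [Module.End.mul_apply, LinearMap.smul_apply, Module.End.natCast_apply, map_nsmul,
      LinearMap.mulRight_apply, iterBracket_eq_pow_apply]
    rw [smul_mul_assoc, mul_comm, mul_smul, natCast_zsmul]

end Ring

theorem sum_pow_mul_mul_pow_eq_smul_sub {k A : Type*} [CommRing k] [Ring A] [Algebra k A]
    (x y : A) (n : ℕ) :
    ∑ j ∈ range (n + 1), x ^ j * y * x ^ (n - j) =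
      (n + 1 : k) • (y * x ^ n) - ∑ i ∈ Icc 2 (n + 1),
        ((-1 : k) ^ i * ((n + 1).choose i : k)) •
          (iterBracket y x (i - 1) * x ^ (n + 1 - i)) := by
  rw [sum_pow_mul_mul_pow, sum_range_succ', ← Ico_add_one_right_eq_Icc, sum_Ico_eq_sum_range,
    add_comm, sub_eq_add_neg, ← sum_neg_distrib]
  congr 1
  · simp [iterBracket, Algebra.smul_def]
  · refine sum_congr (by congr 1) fun p _ => ?_
    rw [← Int.cast_smul_eq_zsmul k]
    simp [pow_succ, add_comm 2 p, Nat.add_sub_add_right]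

theorem Finset.sum_powerset_insert_filter_ne_empty {α M : Type*} [DecidableEq α]
    [AddCommMonoid M] {s : Finset α} {a : α} (ha : a ∉ s) (f : Finset α → M) :
    ∑ t ∈ (insert a s).powerset.filter (· ≠ ∅), f t =
      ∑ t ∈ s.powerset.filter (· ≠ ∅), (f t + f (insert a t)) + f {a} := by
  have h := sum_powerset_insert ha fun t => if t ≠ ∅ then f t else 0
  simp only [← sum_filter, ne_eq, insert_ne_empty, not_false_eq_true, if_true] at h
  rw [h, ← add_sum_erase _ _ (empty_mem_powerset s), ← filter_ne', sum_add_distrib]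
  simp only [insert_empty]
  abel

theorem Finset.sum_powerset_filter_ne_empty_eq_add_sum_singleton {α M : Type*} [DecidableEq α]
    [AddCommMonoid M] {s t : Finset α} (ht : t ⊆ s) (f : Finset α → M) :
    ∑ S ∈ s.powerset.filter (· ≠ ∅), f S =
      ∑ S ∈ s.powerset.filter (fun S => S ≠ ∅ ∧ ∀ i ∈ t, S ≠ {i}), f S +
        ∑ i ∈ t, f {i} := by
  have hsingletons : (s.powerset.filter (· ≠ ∅)).filter (fun S => ¬ ∀ i ∈ t, S ≠ {i}) =
      t.image singleton := by
    ext S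
    simp only [mem_filter, mem_powerset, mem_image, not_forall, not_not, exists_prop]
    constructor
    · rintro ⟨-, i, hi, rfl⟩
      exact ⟨i, hi, rfl⟩
    · rintro ⟨i, hi, rfl⟩
      exact ⟨⟨singleton_subset_iff.2 (ht hi), singleton_ne_empty i⟩, i, hi, rfl⟩
  rw [← sum_filter_add_sum_filter_not _ fun S => ∀ i ∈ t, S ≠ {i}, filter_filter,
    hsingletons, sum_image fun _ _ _ _ h => singleton_injective h]

namespace List
variable {M : Type*} [Monoid M]

theorem prod_map_range'_add (f : ℕ → M) (s m n : ℕ) :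
    (map f (range' s (m + n))).prod =
      (map f (range' s m)).prod * (map f (range' (s + m) n)).prod := by
  rw [← range'_append_1, map_append, prod_append]

theorem prod_map_range'_one_succ (f : ℕ → M) (m : ℕ) :
    (map f (range' 1 (m + 1))).prod = (map f (range' 1 m)).prod * f (m + 1) := by
  simp [prod_map_range'_add, add_comm]

theorem prod_map_range'_of_eq {f : ℕ → M} {x : M} {s n : ℕ}
    (hf : ∀ i ∈ range' s n, f i = x) :
    (map f (range' s n)).prod = x ^ n := by
  simp [map_congr_left hf]

theorem prod_map_range'_of_eq_ite {f : ℕ → M} {x c : M} {s j n : ℕ}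
    (hf : ∀ i ∈ range' s (j + 1 + n), f i = if i = s + j then c else x) :
    (map f (range' s (j + 1 + n))).prod = x ^ j * c * x ^ n := by
  have hf' : ∀ i, s ≤ i → i < s + (j + 1 + n) → f i = if i = s + j then c else x :=
    fun i h₁ h₂ => hf i (mem_range'_1.2 ⟨h₁, h₂⟩)
  rw [prod_map_range'_add, prod_map_range'_add,
    prod_map_range'_of_eq (s := s) (n := j) (x := x) fun i hi => by
      obtain ⟨h₁, h₂⟩ := mem_range'_1.1 hi; rw [hf' i h₁ (by omega), if_neg (by omega)],
    prod_map_range'_of_eq (s := s + (j + 1)) (n := n) (x := x) fun i hi => by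
      obtain ⟨h₁, h₂⟩ := mem_range'_1.1 hi
      rw [hf' i (by omega) (by omega), if_neg (by omega)]]
  simp [hf' (s + j) (by omega) (by omega)]

theorem prod_map_range'_one_eq_mul_mul (f : ℕ → M) {l : ℕ} (hl : 1 ≤ l) (n : ℕ) :
    (map f (range' 1 (l + n + 1))).prod =
      (map f (range' 1 (l - 1))).prod * (map f (range' l (n + 1))).prod * f (l + n + 1) := by
  rw [prod_map_range'_one_succ, show l + n = l - 1 + (n + 1) by omega, prod_map_range'_add,
    show 1 + (l - 1) = l by omega]

end List

def IsRotaBaxter {k A : Type*} [CommSemiring k] [Semiring A] [Algebra k A] (lam : k)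
    (R : A →ₗ[k] A) : Prop :=
  ∀ x y : A, R x * R y = R (R x * y + x * R y + lam • (x * y))

section RotaBaxter
variable {k A : Type*} [CommSemiring k] [Semiring A] [Algebra k A] {lam : k} {R : A →ₗ[k] A}

theorem IsRotaBaxter.prod_map_range' (hR : IsRotaBaxter lam R) (b : ℕ → A) {m : ℕ}
    (hm : 1 ≤ m) :
    (List.map (fun i => R (b i)) (List.range' 1 m)).prod =
      R (∑ S ∈ (Icc 1 m).powerset.filter (· ≠ ∅), lam ^ (S.card - 1) •
        (List.map (fun i => if i ∈ S then b i else R (b i)) (List.range' 1 m)).prod) := by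
  induction m, hm using Nat.le_induction with
  | base => simp [show (Icc 1 1).powerset.filter (· ≠ ∅) = {{1}} by decide]
  | succ m hm ih =>
    set word := fun (S : Finset ℕ) (n : ℕ) =>
      (List.map (fun i => if i ∈ S then b i else R (b i)) (List.range' 1 n)).prod
    set T := ∑ S ∈ (Icc 1 m).powerset.filter (· ≠ ∅), lam ^ (S.card - 1) • word S m
    have hword : ∀ S ⊆ Icc 1 m, word (insert (m + 1) S) m = word S m := fun S hS =>
      congrArg List.prod <| List.map_congr_left fun i hi => by
        have : i ≠ m + 1 := by simp at hi; omega
        simp [this]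
    have hsucc : ∀ S,
        word S (m + 1) = word S m * if m + 1 ∈ S then b (m + 1) else R (b (m + 1)) :=
      fun S => List.prod_map_range'_one_succ _ m
    have hout : ∀ S ∈ (Icc 1 m).powerset.filter (· ≠ ∅), m + 1 ∉ S := fun S hS h => by
      simpa using mem_powerset.1 (mem_filter.1 hS).1 h
    have hsingle :
        R T * b (m + 1) = lam ^ (({m + 1} : Finset ℕ).card - 1) • word {m + 1} (m + 1) := by
      rw [← ih, hsucc, ← insert_empty, hword ∅ (empty_subset _)]
      simp [word]
    have hskip : T * R (b (m + 1)) = ∑ S ∈ (Icc 1 m).powerset.filter (· ≠ ∅),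
        lam ^ (S.card - 1) • word S (m + 1) := by
      rw [sum_mul]
      refine sum_congr rfl fun S hS => ?_
      rw [hsucc, if_neg (hout S hS), smul_mul_assoc]
    have htake : lam • (T * b (m + 1)) = ∑ S ∈ (Icc 1 m).powerset.filter (· ≠ ∅),
        lam ^ ((insert (m + 1) S).card - 1) • word (insert (m + 1) S) (m + 1) := by
      rw [sum_mul, smul_sum]
      refine sum_congr rfl fun S hS => ?_
      have hcard : S.card ≠ 0 := card_ne_zero.2 (nonempty_iff_ne_empty.2 (mem_filter.1 hS).2)
      rw [hsucc, if_pos (mem_insert_self _ _), hword S (mem_powerset.1 (mem_filter.1 hS).1),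
        card_insert_of_notMem (hout S hS), smul_mul_assoc, smul_smul, ← pow_succ']
      congr 2
      omega
    rw [List.prod_map_range'_one_succ, ih, hR, ← insert_Icc_right_eq_Icc_add_one (by omega),
      sum_powerset_insert_filter_ne_empty (by simp), sum_add_distrib, hsingle, hskip, htake]
    exact congrArg R (by simp only [word]; abel)

end RotaBaxter

section Block
variable {A : Type*} [Semiring A] (r : A → A) {b : ℕ → A} {c : A} {l k₀ : ℕ}

theorem prod_map_range'_of_block (hl : 1 ≤ l)
    (hb : ∀ i, l ≤ i → i ≤ l + k₀ → b i = c) :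
    (List.map (fun i => r (b i)) (List.range' 1 (l + k₀ + 1))).prod =
      (List.map (fun i => r (b i)) (List.range' 1 (l - 1))).prod * r c ^ (k₀ + 1)
        * r (b (l + k₀ + 1)) := by
  rw [List.prod_map_range'_one_eq_mul_mul _ hl,
    List.prod_map_range'_of_eq (s := l) fun i hi => by
      obtain ⟨h₁, h₂⟩ := List.mem_range'_1.1 hi
      rw [hb i h₁ (by omega)]]

theorem sum_prod_map_range'_singleton_of_block (hl : 1 ≤ l)
    (hb : ∀ i, l ≤ i → i ≤ l + k₀ → b i = c) :
    ∑ i ∈ Icc l (l + k₀),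
        (List.map (fun j => if j ∈ ({i} : Finset ℕ) then b j else r (b j))
          (List.range' 1 (l + k₀ + 1))).prod =
      (List.map (fun i => r (b i)) (List.range' 1 (l - 1))).prod
        * (∑ j ∈ range (k₀ + 1), r c ^ j * c * r c ^ (k₀ - j)) * r (b (l + k₀ + 1)) := by
  calc _ = ∑ i ∈ Icc l (l + k₀), (List.map (fun i => r (b i)) (List.range' 1 (l - 1))).prod
          * (r c ^ (i - l) * c * r c ^ (l + k₀ - i)) * r (b (l + k₀ + 1)) := by
        refine sum_congr rfl fun i hi => ?_
        obtain ⟨hli, hil⟩ := mem_Icc.1 hi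
        rw [List.prod_map_range'_one_eq_mul_mul _ hl, if_neg (by simp; omega),
          show k₀ + 1 = i - l + 1 + (l + k₀ - i) by omega,
          List.prod_map_range'_of_eq_ite fun j hj => ?_]
        · congr 3
          refine List.map_congr_left fun j hj => ?_
          rw [if_neg (by simp at hj ⊢; omega)]
        · obtain ⟨h₁, h₂⟩ := List.mem_range'_1.1 hj
          rw [show l + (i - l) = i by omega, hb j h₁ (by omega)]
          simp
    _ = ∑ j ∈ range (k₀ + 1), (List.map (fun i => r (b i)) (List.range' 1 (l - 1))).prod
          * (r c ^ j * c * r c ^ (k₀ - j)) * r (b (l + k₀ + 1)) := by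
        rw [← Ico_add_one_right_eq_Icc, sum_Ico_eq_sum_range]
        refine sum_congr (by congr 1; omega) fun j _ => ?_
        rw [Nat.add_sub_cancel_left, Nat.add_sub_add_left]
    _ = _ := by rw [mul_sum, sum_mul]

end Block

theorem stmt2 {k A : Type*} [Field k] [CharZero k] [Ring A] [Algebra k A] (lam : k)
    (R : A →ₗ[k] A)
    (hR : ∀ x y : A, R x * R y = R (R x * y + x * R y + lam • (x * y)))
    (l k₀ : ℕ) (hl : 1 ≤ l) (b : ℕ → A) (c : A)
    (hb : ∀ i, l ≤ i → i ≤ l + k₀ → b i = c) :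
    R ((List.map (fun i => R (b i)) (List.range' 1 (l - 1))).prod * c * (R c) ^ k₀
        * R (b (l + k₀ + 1))) =
      ((k₀ + 1 : k)⁻¹) • ((List.map (fun i => R (b i)) (List.range' 1 (l - 1))).prod
          * (R c) ^ (k₀ + 1) * R (b (l + k₀ + 1)))
      + ((k₀ + 1 : k)⁻¹) • R (
          (∑ i ∈ Finset.Icc 2 (k₀ + 1),
            ((-1 : k) ^ i * (Nat.choose (k₀ + 1) i : k)) •
              ((List.map (fun j => R (b j)) (List.range' 1 (l - 1))).prod
                * iterBracket c (R c) (i - 1) * (R c) ^ (k₀ + 1 - i) * R (b (l + k₀ + 1))))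
          - ∑ S ∈ (Finset.Icc 1 (l + k₀ + 1)).powerset.filter
              (fun S => S ≠ ∅ ∧ ∀ i ∈ Finset.Icc l (l + k₀), S ≠ {i}),
              lam ^ (S.card - 1) •
                (List.map (fun i => if i ∈ S then b i else R (b i))
                  (List.range' 1 (l + k₀ + 1))).prod) := by
  have hexpand := IsRotaBaxter.prod_map_range' hR b (m := l + k₀ + 1) (by omega)
  rw [prod_map_range'_of_block R hl hb, sum_powerset_filter_ne_empty_eq_add_sum_singleton
    (t := Icc l (l + k₀)) (Icc_subset_Icc hl (by omega))] at hexpand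
  simp only [card_singleton, Nat.sub_self, pow_zero, one_smul] at hexpand
  rw [sum_prod_map_range'_singleton_of_block R hl hb, sum_pow_mul_mul_pow_eq_smul_sub (k := k)]
    at hexpand
  rw [hexpand, ← smul_add, ← map_add,
    show ∀ F X E : A, F + X + (E - F) = X + E from fun _ _ _ => by abel, mul_sub, sub_mul]
  simp only [mul_sum, sum_mul, mul_smul_comm, smul_mul_assoc, ← mul_assoc, sub_add_cancel,
    map_smul]
  rw [inv_smul_smul₀ (Nat.cast_add_one_ne_zero k₀)]
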